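/- arXiv:2105.07229 — 5 statements merged into one kernel-verified Lean document; each statement's English description precedes it below -/
import Mathlib

section
/- Let N1 and N2 be constrained matrix zonotopes of n×p matrices with centers C1, C2, generators (G1^{(i)})_{i=1}^{γ1}, (G2^{(j)})_{j=1}^{γ2}, and constraints given by (A1^{(i)}, B1) and (A2^{(j)}, B2) respectively. Then the Minkowski sum N1 + N2 = {X1 + X2 : X1 ∈ N1, X2 ∈ N2} equals the constrained matrix zonotope with center C1 + C2, generators formed by concatenating (G1^{(i)}) and (G2^{(j)}), constraint matrices given by block-diagonal embeddings [[A1^{(i)}, 0],[0,0]] for i ≤ γ1 and [[0,0],[0, A2^{(j)}]] for the remaining indices, and offset the block-diagonal matrix diag(B1, B2). -/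
open Matrix

/-- A constrained matrix zonotope with center `C`, generator matrices `G i`,
constraint matrices `A i` and offset `B`. -/
def cmz {α β κ δ ι : Type*} [Fintype ι] (C : Matrix α β ℝ) (G : ι → Matrix α β ℝ)
    (A : ι → Matrix κ δ ℝ) (B : Matrix κ δ ℝ) : Set (Matrix α β ℝ) :=
  {X | ∃ b : ι → ℝ, (∀ i, |b i| ≤ 1) ∧ (∑ i, b i • A i) = B ∧ X = C + ∑ i, b i • G i}

open scoped Pointwise

section

variable {α β κ₁ δ₁ κ₂ δ₂ ι₁ ι₂ : Type*} [Fintype ι₁] [Fintype ι₂]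

theorem sum_smul_sumElim_fromBlocks (b : ι₁ ⊕ ι₂ → ℝ)
    (A₁ : ι₁ → Matrix κ₁ δ₁ ℝ) (A₂ : ι₂ → Matrix κ₂ δ₂ ℝ) :
    ∑ i, b i • Sum.elim (fun i => fromBlocks (A₁ i) 0 0 0) (fun j => fromBlocks 0 0 0 (A₂ j)) i
      = fromBlocks (∑ i, b (.inl i) • A₁ i) 0 0 (∑ j, b (.inr j) • A₂ j) := by
  ext (k | k) (d | d) <;> simp [Matrix.sum_apply, Fintype.sum_sum_type]

theorem sum_smul_sumElim (b : ι₁ ⊕ ι₂ → ℝ) (G₁ : ι₁ → Matrix α β ℝ) (G₂ : ι₂ → Matrix α β ℝ) :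
    ∑ i, b i • Sum.elim G₁ G₂ i = ∑ i, b (.inl i) • G₁ i + ∑ j, b (.inr j) • G₂ j := by
  simp [Fintype.sum_sum_type]

/-- The block-diagonal constraints do not couple the two coefficient blocks, so a coefficient
vector of the sum is exactly a pair of coefficient vectors of the summands. -/
theorem cmz_add_cmz (C₁ C₂ : Matrix α β ℝ) (G₁ : ι₁ → Matrix α β ℝ) (G₂ : ι₂ → Matrix α β ℝ)
    (A₁ : ι₁ → Matrix κ₁ δ₁ ℝ) (B₁ : Matrix κ₁ δ₁ ℝ)
    (A₂ : ι₂ → Matrix κ₂ δ₂ ℝ) (B₂ : Matrix κ₂ δ₂ ℝ) :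
    cmz C₁ G₁ A₁ B₁ + cmz C₂ G₂ A₂ B₂
      = cmz (C₁ + C₂) (Sum.elim G₁ G₂)
          (Sum.elim (fun i => fromBlocks (A₁ i) 0 0 0) (fun j => fromBlocks 0 0 0 (A₂ j)))
          (fromBlocks B₁ 0 0 B₂) := by
  ext X
  constructor
  · rintro ⟨_, ⟨b₁, hb₁, hA₁, rfl⟩, _, ⟨b₂, hb₂, hA₂, rfl⟩, rfl⟩
    refine ⟨Sum.elim b₁ b₂, ?_, ?_, ?_⟩
    · rintro (i | j)
      exacts [hb₁ i, hb₂ j]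
    · simp only [sum_smul_sumElim_fromBlocks, Sum.elim_inl, Sum.elim_inr, hA₁, hA₂]
    · simp only [sum_smul_sumElim, Sum.elim_inl, Sum.elim_inr, add_add_add_comm]
  · rintro ⟨b, hb, hA, rfl⟩
    rw [sum_smul_sumElim_fromBlocks, fromBlocks_inj] at hA
    refine ⟨_, ⟨fun i => b (.inl i), fun i => hb _, hA.1, rfl⟩,
      _, ⟨fun j => b (.inr j), fun j => hb _, hA.2.2.2, rfl⟩, ?_⟩
    rw [sum_smul_sumElim, add_add_add_comm]

end

theorem minkowski_sum_cmz {n p nc1 na1 nc2 na2 γ1 γ2 : ℕ}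
    (C1 C2 : Matrix (Fin n) (Fin p) ℝ)
    (G1 : Fin γ1 → Matrix (Fin n) (Fin p) ℝ) (G2 : Fin γ2 → Matrix (Fin n) (Fin p) ℝ)
    (A1 : Fin γ1 → Matrix (Fin nc1) (Fin na1) ℝ) (B1 : Matrix (Fin nc1) (Fin na1) ℝ)
    (A2 : Fin γ2 → Matrix (Fin nc2) (Fin na2) ℝ) (B2 : Matrix (Fin nc2) (Fin na2) ℝ) :
    {X | ∃ X1 ∈ cmz C1 G1 A1 B1, ∃ X2 ∈ cmz C2 G2 A2 B2, X = X1 + X2}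
      = cmz (C1 + C2) (Sum.elim G1 G2)
          (Sum.elim (fun i => Matrix.fromBlocks (A1 i) 0 0 0)
                    (fun j => Matrix.fromBlocks 0 0 0 (A2 j)))
          (Matrix.fromBlocks B1 0 0 B2) := by
  rw [← cmz_add_cmz]
  ext X
  simp only [Set.mem_ofPred_eq, Set.mem_add, eq_comm]
end

section
/- Let N = ⟨C_N, (G_N^{(i)})_{i=1}^{γN}, (A_N^{(i)})_{i=1}^{γN}, B_N⟩ be a constrained matrix zonotope of p×n matrices and Z = ⟨c_Z, G_Z⟩ a zonotope in ℝⁿ with γZ generators. For each i define f^{(i)} = max(|β_L^{(i)}|, |β_U^{(i)}|) where β_L^{(i)} (resp. β_U^{(i)}) is the minimum (resp. maximum) of β^{(i)} over all β with Σ_j β^{(j)} A_N^{(j)} = B_N and ‖β‖∞ ≤ 1 (assumed nonempty). Then the set N·Z = {X z : X ∈ N, z ∈ Z} is contained in the constrained zonotope with center C_N c_Z, generator matrix [G_N^{(1)} c_Z … G_N^{(γN)} c_Z, C_N G_Z, G_f] where G_f collects the columns f^{(i)} G_N^{(i)} g_Z^{(j)} for all i, j (g_Z^{(j)} being the columns of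 G_Z), constraint matrix [A_{NZ}, 0, 0] where the column i of A_{NZ} is vec(A_N^{(i)}), and constraint vector vec(B_N). -/
open Matrix

/-- A zonotope with center `c` and generator matrix `G`. -/
def zono {α ι : Type*} [Fintype ι] (c : α → ℝ) (G : Matrix α ι ℝ) : Set (α → ℝ) :=
  {x | ∃ β : ι → ℝ, (∀ i, |β i| ≤ 1) ∧ x = c + G.mulVec β}

/-- A constrained zonotope with center `c`, generator matrix `G`,
constraint matrix `A` and constraint vector `b`. -/
def czono {α κ ι : Type*} [Fintype ι] (c : α → ℝ) (G : Matrix α ι ℝ)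
    (A : Matrix κ ι ℝ) (b : κ → ℝ) : Set (α → ℝ) :=
  {x | ∃ β : ι → ℝ, (∀ i, |β i| ≤ 1) ∧ A.mulVec β = b ∧ x = c + G.mulVec β}

/-! For `X = C + ∑ i, b i • G i` in the matrix zonotope and `z = c + G_Z β` in the zonotope,
`X z = C c + ∑ b_i G_i c + C G_Z β + ∑_{i,j} b_i β_j G_i g_j`. Every feasible `b_i` lies in
`[β_L, β_U]`, so `b_i = f_i s_i` with `|s_i| ≤ 1`, and the bilinear terms become the generators
`f_i G_i g_j` with the admissible factors `s_i β_j`. Only `b` is constrained, and its constraint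
`∑ b_i A_i = B` is the vectorised constraint of the image. -/

lemma exists_abs_le_one_mul_eq {f y : ℝ} (h : |y| ≤ f) : ∃ s, |s| ≤ 1 ∧ f * s = y := by
  rcases (abs_nonneg y |>.trans h).eq_or_lt with hf | hf
  · subst hf
    exact ⟨0, by simp, by simpa [eq_comm] using h⟩
  · exact ⟨y / f, by rwa [abs_div, abs_of_pos hf, div_le_one hf], mul_div_cancel₀ y hf.ne'⟩

section

variable {m n ι κ ρ σ : Type*} [Fintype n] [Fintype ι] [Fintype κ]

lemma transpose_of_mulVec (v : ι → m → ℝ) (b : ι → ℝ) : (of v)ᵀ *ᵥ b = ∑ i, b i • v i := by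
  rw [mulVec_transpose, vecMul_eq_sum]
  rfl

lemma of_prod_mulVec_mul (f s : ι → ℝ) (H : ι → Matrix m κ ℝ) (β : κ → ℝ) :
    (of fun r (ij : ι × κ) => f ij.1 * H ij.1 r ij.2) *ᵥ (fun ij => s ij.1 * β ij.2) =
      ∑ i, (f i * s i) • H i *ᵥ β := by
  ext r
  simp only [mulVec, dotProduct, of_apply, Fintype.sum_prod_type, Finset.sum_apply, Pi.smul_apply,
    smul_eq_mul, Finset.mul_sum]
  exact Finset.sum_congr rfl fun i _ => Finset.sum_congr rfl fun j _ => by ring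

lemma add_sum_smul_mulVec_add_mulVec (C : Matrix m n ℝ) (G : ι → Matrix m n ℝ) (b : ι → ℝ)
    (c : n → ℝ) (GZ : Matrix n κ ℝ) (β : κ → ℝ) :
    (C + ∑ i, b i • G i) *ᵥ (c + GZ *ᵥ β) =
      C *ᵥ c + (∑ i, b i • G i *ᵥ c + ((C * GZ) *ᵥ β + ∑ i, b i • (G i * GZ) *ᵥ β)) := by
  simp only [add_mulVec, mulVec_add, sum_mulVec, smul_mulVec, ← mulVec_mulVec]
  abel

theorem cmz_mul_zono_subset_of_abs_le (C : Matrix m n ℝ) (G : ι → Matrix m n ℝ)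
    (A : ι → Matrix ρ σ ℝ) (B : Matrix ρ σ ℝ) (c : n → ℝ) (GZ : Matrix n κ ℝ) (f : ι → ℝ)
    (hf : ∀ b : ι → ℝ, (∀ i, |b i| ≤ 1) → ∑ i, b i • A i = B → ∀ i, |b i| ≤ f i) :
    {y | ∃ X ∈ cmz C G A B, ∃ z ∈ zono c GZ, y = X *ᵥ z} ⊆
      czono (C *ᵥ c)
        (fromCols (of fun i => G i *ᵥ c)ᵀ
          (fromCols (C * GZ) (of fun r (ij : ι × κ) => f ij.1 * (G ij.1 * GZ) r ij.2)))
        (fromCols (of fun i (rs : ρ × σ) => A i rs.1 rs.2)ᵀ (fromCols 0 0))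
        (fun rs => B rs.1 rs.2) := by
  rintro y ⟨X, ⟨b, hb, hbA, rfl⟩, z, ⟨β, hβ, rfl⟩, rfl⟩
  choose s hs hfs using fun i => exists_abs_le_one_mul_eq (hf b hb hbA i)
  refine ⟨Sum.elim b (Sum.elim β fun ij => s ij.1 * β ij.2), ?_, ?_, ?_⟩
  · rintro (i | j | ij)
    · exact hb i
    · exact hβ j
    · show |s ij.1 * β ij.2| ≤ 1
      rw [abs_mul]
      exact mul_le_one₀ (hs _) (abs_nonneg _) (hβ _)
  · ext rs
    rw [fromCols_mulVec_sumElim, fromCols_mulVec_sumElim, zero_mulVec, zero_mulVec, add_zero,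
      add_zero, transpose_of_mulVec, ← hbA]
    simp [Finset.sum_apply, Matrix.sum_apply]
  · rw [fromCols_mulVec_sumElim, fromCols_mulVec_sumElim, transpose_of_mulVec,
      of_prod_mulVec_mul f s fun i => G i * GZ, add_sum_smul_mulVec_add_mulVec]
    simp only [hfs]

end

theorem cmz_mul_zono_subset {p n nc na γN γZ : ℕ}
    (CN : Matrix (Fin p) (Fin n) ℝ) (GN : Fin γN → Matrix (Fin p) (Fin n) ℝ)
    (AN : Fin γN → Matrix (Fin nc) (Fin na) ℝ) (BN : Matrix (Fin nc) (Fin na) ℝ)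
    (cZ : Fin n → ℝ) (GZ : Matrix (Fin n) (Fin γZ) ℝ)
    (βL βU f : Fin γN → ℝ)
    (hβL : ∀ i, IsLeast {t | ∃ β : Fin γN → ℝ, (∀ j, |β j| ≤ 1) ∧
        (∑ j, β j • AN j) = BN ∧ t = β i} (βL i))
    (hβU : ∀ i, IsGreatest {t | ∃ β : Fin γN → ℝ, (∀ j, |β j| ≤ 1) ∧
        (∑ j, β j • AN j) = BN ∧ t = β i} (βU i))
    (hf : ∀ i, f i = max |βL i| |βU i|) :
    {y | ∃ X ∈ cmz CN GN AN BN, ∃ z ∈ zono cZ GZ, y = X.mulVec z}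
      ⊆ czono (CN.mulVec cZ)
          (Matrix.of fun r k =>
            Sum.elim (fun i => (GN i).mulVec cZ r)
              (Sum.elim (fun j => (CN * GZ) r j)
                (fun ij : Fin γN × Fin γZ => f ij.1 * (GN ij.1 * GZ) r ij.2)) k)
          (Matrix.of fun (rs : Fin nc × Fin na) k =>
            Sum.elim (fun i => AN i rs.1 rs.2)
              (Sum.elim (fun _ : Fin γZ => (0:ℝ))
                (fun _ : Fin γN × Fin γZ => (0:ℝ))) k)
          (fun rs : Fin nc × Fin na => BN rs.1 rs.2) := by
  -- the generator and constraint matrices above are the `fromCols` blocks of the lemma, unfolded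
  refine cmz_mul_zono_subset_of_abs_le CN GN AN BN cZ GZ f fun b hb hbA i => ?_
  have hbi : b i ∈ {t | ∃ β : Fin γN → ℝ, (∀ j, |β j| ≤ 1) ∧ (∑ j, β j • AN j) = BN ∧ t = β i} :=
    ⟨b, hb, hbA, rfl⟩
  exact hf i ▸ abs_le_max_abs_abs ((hβL i).2 hbi) ((hβU i).2 hbi)
end

section
/- Consider the LTI system x(k+1) = A_tr x(k) + B_tr u(k) + w(k) with state data matrices X_-, X_+ ∈ ℝ^{n×T}, input data matrix U_- ∈ ℝ^{m×T} satisfying X_+ = A_tr X_- + B_tr U_- + Ŵ_-, where the unknown noise matrix Ŵ_- belongs to a matrix zonotope M_w = ⟨C_w, (G_w^{(i)})_{i=1}^{γ}⟩. Suppose H ∈ ℝ^{T×(n+m)} satisfies [X_-; U_-] H = I_{n+m}. Then the matrix zonotope M_Σ = (X_+ − M_w) H, i.e., the matrix zonotope with center (X_+ − C_w)H and generators −G_w^{(i)} H, contains every matrix [A B] ∈ ℝ^{n×(n+m)} for which there exists W_- ∈ M_w with X_+ = A X_- + B U_- + W_-. In particular it contains [A_tr B_tr]. -/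
open Matrix

/-- A matrix zonotope with center `C` and generator matrices `G i`. -/
def mz {α β ι : Type*} [Fintype ι] (C : Matrix α β ℝ) (G : ι → Matrix α β ℝ) :
    Set (Matrix α β ℝ) :=
  {X | ∃ b : ι → ℝ, (∀ i, |b i| ≤ 1) ∧ X = C + ∑ i, b i • G i}

theorem sub_mul_mem_mz {α β κ ι : Type*} [Fintype β] [Fintype ι]
    {C W : Matrix α β ℝ} {G : ι → Matrix α β ℝ} (hW : W ∈ mz C G)
    (Y : Matrix α β ℝ) (H : Matrix β κ ℝ) :
    (Y - W) * H ∈ mz ((Y - C) * H) (fun i => -(G i * H)) := by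
  obtain ⟨b, hb, rfl⟩ := hW
  refine ⟨b, hb, ?_⟩
  simp only [Matrix.sub_mul, Matrix.add_mul, Matrix.sum_mul, Matrix.smul_mul, smul_neg,
    Finset.sum_neg_distrib]
  abel

theorem eq_sub_mul_of_mul_eq_one {α β κ : Type*} [Fintype β] [Fintype κ] [DecidableEq κ]
    {W Y : Matrix α β ℝ} {Θ : Matrix α κ ℝ} {D : Matrix κ β ℝ} {H : Matrix β κ ℝ}
    (hY : Y = Θ * D + W) (hH : D * H = 1) :
    Θ = (Y - W) * H := by
  rw [hY, add_sub_cancel_right, Matrix.mul_assoc, hH, Matrix.mul_one]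

theorem mem_mz_of_consistent {α β κ ι : Type*} [Fintype β] [Fintype κ] [DecidableEq κ]
    [Fintype ι] {C Y : Matrix α β ℝ} {G : ι → Matrix α β ℝ} {Θ : Matrix α κ ℝ}
    {D : Matrix κ β ℝ} {H : Matrix β κ ℝ} (hH : D * H = 1)
    (hΘ : ∃ W ∈ mz C G, Y = Θ * D + W) :
    Θ ∈ mz ((Y - C) * H) (fun i => -(G i * H)) := by
  obtain ⟨W, hW, hY⟩ := hΘ
  rw [eq_sub_mul_of_mul_eq_one hY hH]
  exact sub_mul_mem_mz hW Y H

theorem mz_contains_consistent_models {n m T γ : ℕ}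
    (Atr : Matrix (Fin n) (Fin n) ℝ) (Btr : Matrix (Fin n) (Fin m) ℝ)
    (Xm Xp : Matrix (Fin n) (Fin T) ℝ) (Um : Matrix (Fin m) (Fin T) ℝ)
    (Cw : Matrix (Fin n) (Fin T) ℝ) (Gw : Fin γ → Matrix (Fin n) (Fin T) ℝ)
    (Wtr : Matrix (Fin n) (Fin T) ℝ)
    (hdata : Xp = Atr * Xm + Btr * Um + Wtr) (hWtr : Wtr ∈ mz Cw Gw)
    (H : Matrix (Fin T) (Fin n ⊕ Fin m) ℝ)
    (hH : Matrix.fromRows Xm Um * H = 1) :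
    (∀ AB : Matrix (Fin n) (Fin n ⊕ Fin m) ℝ,
        (∃ W ∈ mz Cw Gw, Xp = AB * Matrix.fromRows Xm Um + W) →
        AB ∈ mz ((Xp - Cw) * H) (fun i => -(Gw i * H))) ∧
      Matrix.fromCols Atr Btr ∈ mz ((Xp - Cw) * H) (fun i => -(Gw i * H)) := by
  refine ⟨fun AB hAB => mem_mz_of_consistent hH hAB, mem_mz_of_consistent hH ⟨Wtr, hWtr, ?_⟩⟩
  rw [hdata, Matrix.fromCols_mul_fromRows]
end

section
/- Consider the system x(k+1) = A_tr x(k) + B_tr u(k) + w(k), y(k) = x(k) + v(k), with data matrices Y_-, Y_+ (shifted noisy state data) and U_-. Let V_-, V_+ be the measurement-noise matrices so that Y_± = X_± + V_±, and let W_- be the process-noise matrix. Suppose Ô := V_+ − A_tr V_- belongs to a known matrix zonotope M_o, W_- ∈ M_w, and there exists H̃ with [Y_-; U_-] H̃ = I. Then [A_tr B_tr] ∈ M_Σ̃ := (Y_+ − M_o − M_w) H̃, and consequently the recursion R̂_0^m = X_0, R̂_{k+1}^m = M_Σ̃ (R̂_k^m × U_k) + Z_w, produces sets satisfying R_k ⊆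 R̂_k^m for all k, where R_k is the exact reachable set of the system. -/
/-!
Because `[Y₋; U₋] H̃ = I`, the true matrix `[A B]` equals `[A B] [Y₋; U₋] H̃`, and
`[A B] [Y₋; U₋] = A X₋ + B U₋ + A V₋ = Y₊ - (V₊ - A V₋) - W₋`. So `[A B]` is the member of
`M_Σ̃` obtained from the actual noise realisations `O = V₊ - A V₋ ∈ M_o` and `W₋ ∈ M_w`.
Using `[A B]` as the model at every step of the set recursion, induction on `k` keeps every
trajectory of the true system inside `R̂ₖ`.
-/

open Matrix

section Models

variable {R : Type*} [Ring R] {n m T : Type*} [Fintype n] [Fintype m]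

/-- The matrix zonotope `(Y₊ - M_o - M_w) H̃` of models consistent with the data. -/
def consistentModels [Fintype T] (Yp : Matrix n T R) (Mo Mw : Set (Matrix n T R))
    (H : Matrix T (n ⊕ m) R) : Set (Matrix n (n ⊕ m) R) :=
  {M | ∃ O ∈ Mo, ∃ W ∈ Mw, M = (Yp - O - W) * H}

/-- One step `M_Σ̃ (X × U) + Z_w` of the reachability recursion. -/
def reachStep (Ms : Set (Matrix n (n ⊕ m) R)) (X : Set (n → R)) (U : Set (m → R))
    (Zw : Set (n → R)) : Set (n → R) :=
  {y | ∃ M ∈ Ms, ∃ x ∈ X, ∃ u ∈ U, ∃ w ∈ Zw, y = M *ᵥ Sum.elim x u + w}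

theorem fromCols_mul_fromRows_eq_sub_noise {A : Matrix n n R} {B : Matrix n m R}
    {Xm Xp Vm Vp Wm Ym Yp : Matrix n T R} {Um : Matrix m T R}
    (hX : Xp = A * Xm + B * Um + Wm) (hYm : Ym = Xm + Vm) (hYp : Yp = Xp + Vp) :
    fromCols A B * fromRows Ym Um = Yp - (Vp - A * Vm) - Wm := by
  rw [fromCols_mul_fromRows, hYp, hX, hYm, Matrix.mul_add]
  abel

theorem fromCols_mem_consistentModels [Fintype T] [DecidableEq n] [DecidableEq m]
    {A : Matrix n n R} {B : Matrix n m R}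
    {Xm Xp Vm Vp Wm Ym Yp : Matrix n T R} {Um : Matrix m T R}
    {Mo Mw : Set (Matrix n T R)} {H : Matrix T (n ⊕ m) R}
    (hX : Xp = A * Xm + B * Um + Wm) (hYm : Ym = Xm + Vm) (hYp : Yp = Xp + Vp)
    (hO : Vp - A * Vm ∈ Mo) (hW : Wm ∈ Mw) (hH : fromRows Ym Um * H = 1) :
    fromCols A B ∈ consistentModels Yp Mo Mw H := by
  refine ⟨Vp - A * Vm, hO, Wm, hW, ?_⟩
  rw [← fromCols_mul_fromRows_eq_sub_noise hX hYm hYp, Matrix.mul_assoc, hH, Matrix.mul_one]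

theorem add_mem_reachStep {Ms : Set (Matrix n (n ⊕ m) R)} {X : Set (n → R)}
    {U : Set (m → R)} {Zw : Set (n → R)} {A : Matrix n n R} {B : Matrix n m R}
    {x : n → R} {u : m → R} {w : n → R}
    (hAB : fromCols A B ∈ Ms) (hx : x ∈ X) (hu : u ∈ U) (hw : w ∈ Zw) :
    A *ᵥ x + B *ᵥ u + w ∈ reachStep Ms X U Zw :=
  ⟨fromCols A B, hAB, x, hx, u, hu, w, hw, by rw [fromCols_mulVec_sumElim]⟩

end Models

theorem mem_of_mem_zero_of_forall_lt_succ {α : Type*} {S : ℕ → Set α} {x : ℕ → α} {k : ℕ}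
    (h0 : x 0 ∈ S 0) (hstep : ∀ j < k, x j ∈ S j → x (j + 1) ∈ S (j + 1)) : x k ∈ S k := by
  induction k with
  | zero => exact h0
  | succ k ih =>
    exact hstep k k.lt_succ_self (ih fun j hj => hstep j (hj.trans k.lt_succ_self))

theorem meas_noise_reachability {n m T : ℕ}
    (Atr : Matrix (Fin n) (Fin n) ℝ) (Btr : Matrix (Fin n) (Fin m) ℝ)
    (Xm Xp Vm Vp Wm : Matrix (Fin n) (Fin T) ℝ)
    (Ym Yp : Matrix (Fin n) (Fin T) ℝ) (Um : Matrix (Fin m) (Fin T) ℝ)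
    (hX : Xp = Atr * Xm + Btr * Um + Wm)
    (hYm : Ym = Xm + Vm) (hYp : Yp = Xp + Vp)
    (Mo Mw : Set (Matrix (Fin n) (Fin T) ℝ))
    (hO : Vp - Atr * Vm ∈ Mo) (hW : Wm ∈ Mw)
    (Htil : Matrix (Fin T) (Fin n ⊕ Fin m) ℝ)
    (hH : Matrix.fromRows Ym Um * Htil = 1)
    (Msig : Set (Matrix (Fin n) (Fin n ⊕ Fin m) ℝ))
    (hMsig : Msig = {M | ∃ O ∈ Mo, ∃ W ∈ Mw, M = (Yp - O - W) * Htil})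
    (X0 Zw : Set (Fin n → ℝ)) (U : ℕ → Set (Fin m → ℝ))
    (Rhat : ℕ → Set (Fin n → ℝ))
    (hR0 : Rhat 0 = X0)
    (hRk : ∀ k, Rhat (k + 1) =
      {y | ∃ M ∈ Msig, ∃ x ∈ Rhat k, ∃ u ∈ U k, ∃ w ∈ Zw,
        y = M.mulVec (Sum.elim x u) + w}) :
    Matrix.fromCols Atr Btr ∈ Msig ∧
    ∀ (k : ℕ) (x : ℕ → Fin n → ℝ) (u : ℕ → Fin m → ℝ) (w : ℕ → Fin n → ℝ),
      x 0 ∈ X0 →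
      (∀ j < k, u j ∈ U j) →
      (∀ j < k, w j ∈ Zw) →
      (∀ j < k, x (j + 1) = Atr.mulVec (x j) + Btr.mulVec (u j) + w j) →
      x k ∈ Rhat k := by
  have hmem : Matrix.fromCols Atr Btr ∈ Msig := by
    rw [hMsig]
    exact fromCols_mem_consistentModels hX hYm hYp hO hW hH
  refine ⟨hmem, fun k x u w hx0 hu hw hdyn => ?_⟩
  refine mem_of_mem_zero_of_forall_lt_succ (hR0 ▸ hx0) fun j hj hxj => ?_
  rw [hRk, hdyn j hj]
  exact add_mem_reachStep hmem hxj (hu j hj) (hw j hj)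
end

section
/- Consider a polynomial system x(k+1) = C_tr g(z(k)) + w(k) where z(k) stacks x(k) and u(k) and g maps ℝ^{n+m} to ℝ^{m_c}. Let Ĝ = [g(z_0) … g(z_{T−1})] ∈ ℝ^{m_c×T} be the data matrix of evaluated monomials and X_+ the successor-state data, so that X_+ = C_tr Ĝ + Ŵ_- with the unknown Ŵ_- ∈ M_w (a matrix zonotope). If H^p satisfies Ĝ H^p = I_{m_c}, then the matrix zonotope M_Σ^p = (X_+ − M_w) H^p contains every matrix C for which there exists W_- ∈ M_w with X_+ = C Ĝ + W_-; in particular C_tr ∈ M_Σ^p. -/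
open Matrix

/-! Since `Ĝ * Hp = 1`, any `C` with `Xp = C * Ĝ + W` equals `(Xp - W) * Hp`, and the affine map
`W ↦ (Xp - W) * Hp` carries the zonotope `M_w` into the zonotope with the same coefficients `β`. -/

section MatrixZonotope

variable {α β ι : Type*} [Fintype ι]

theorem sub_mem_mz {C X : Matrix α β ℝ} {G : ι → Matrix α β ℝ} (A : Matrix α β ℝ)
    (hX : X ∈ mz C G) : A - X ∈ mz (A - C) (fun i => -G i) := by
  obtain ⟨b, hb, rfl⟩ := hX
  refine ⟨b, hb, ?_⟩
  simp only [smul_neg, Finset.sum_neg_distrib]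
  abel

theorem mul_mem_mz {κ : Type*} [Fintype β] {C X : Matrix α β ℝ} {G : ι → Matrix α β ℝ}
    (H : Matrix β κ ℝ) (hX : X ∈ mz C G) : X * H ∈ mz (C * H) (fun i => G i * H) := by
  obtain ⟨b, hb, rfl⟩ := hX
  refine ⟨b, hb, ?_⟩
  simp only [Matrix.add_mul, Matrix.sum_mul, Matrix.smul_mul]

end MatrixZonotope

theorem Matrix.eq_sub_mul_of_eq_mul_add {R l m n : Type*} [Ring R] [Fintype m] [Fintype n]
    [DecidableEq m] {X W : Matrix l n R} {C : Matrix l m R} {G : Matrix m n R}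
    {H : Matrix n m R} (hX : X = C * G + W) (hGH : G * H = 1) : C = (X - W) * H := by
  rw [hX, add_sub_cancel_right, Matrix.mul_assoc, hGH, Matrix.mul_one]

theorem poly_mz_contains_consistent_models {n mc T γ : ℕ}
    (Ctr : Matrix (Fin n) (Fin mc) ℝ)
    (Ghat : Matrix (Fin mc) (Fin T) ℝ) (Xp : Matrix (Fin n) (Fin T) ℝ)
    (Cw : Matrix (Fin n) (Fin T) ℝ) (Gw : Fin γ → Matrix (Fin n) (Fin T) ℝ)
    (Wtr : Matrix (Fin n) (Fin T) ℝ)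
    (hdata : Xp = Ctr * Ghat + Wtr) (hWtr : Wtr ∈ mz Cw Gw)
    (Hp : Matrix (Fin T) (Fin mc) ℝ) (hHp : Ghat * Hp = 1) :
    (∀ C : Matrix (Fin n) (Fin mc) ℝ,
        (∃ W ∈ mz Cw Gw, Xp = C * Ghat + W) →
        C ∈ mz ((Xp - Cw) * Hp) (fun i => -(Gw i * Hp))) ∧
      Ctr ∈ mz ((Xp - Cw) * Hp) (fun i => -(Gw i * Hp)) := by
  have consistent : ∀ C : Matrix (Fin n) (Fin mc) ℝ,
      (∃ W ∈ mz Cw Gw, Xp = C * Ghat + W) →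
      C ∈ mz ((Xp - Cw) * Hp) (fun i => -(Gw i * Hp)) := by
    rintro C ⟨W, hW, hXp⟩
    rw [eq_sub_mul_of_eq_mul_add hXp hHp]
    simpa only [Matrix.neg_mul] using mul_mem_mz Hp (sub_mem_mz Xp hW)
  exact ⟨consistent, consistent Ctr ⟨Wtr, hWtr, hdata⟩⟩
end
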